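/- For all integers $n \ge k \ge 0$, the $k$-th derivative of the polynomial function $x \mapsto B_n^{(L,Y)}(x)$ satisfies $\Big(\frac{d}{dx}\Big)^k B_n^{(L,Y)}(x) = k!\sum_{j=0}^{n-k}\binom{n}{j} B_j^{(L,Y)}(x)\, L_Y(n-j,k)$ for every real $x$. In particular, for $k=1$ and $n \ge 1$, $\frac{d}{dx}B_n^{(L,Y)}(x) = \sum_{j=0}^{n-1}\binom{n}{j} E\big[\langle Y\rangle_{n-j}\big] B_j^{(L,Y)}(x)$. -/

import Mathlib

/-!
Let `G(t) = ∑ E[⟨Y⟩_n] tⁿ/n!`. Vandermonde's identity `⟨x+y⟩_n = ∑ C(n,i) ⟨x⟩_i ⟨y⟩_{n-i}` and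
independence make `n ↦ E[⟨S_{l+1}⟩_n]` the binomial convolution of `n ↦ E[⟨S_l⟩_n]` with
`n ↦ E[⟨Y⟩_n]`, so its exponential generating function is `G^(l+1)`; by the binomial theorem that
of `n ↦ k! L_Y(n,k)` is `(G - 1)^k`. As `G(0) = 1`, `L_Y(n,k) = 0` for `n < k`, and
`(G - 1)^(m+k) = (G - 1)^m (G - 1)^k` reads
`(m+k)! L_Y(n,m+k) = ∑ C(n,j) m! L_Y(j,m) k! L_Y(n-j,k)`, which is the identity between the coefficients of `x^m` on both sides of the derivative formula.
-/

open MeasureTheory ProbabilityTheory Finset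

/-- The rising factorial `⟨x⟩_n = x (x+1) ⋯ (x+n-1)`, with `⟨x⟩_0 = 1`. -/
noncomputable def asc (x : ℝ) : ℕ → ℝ
  | 0 => 1
  | n + 1 => asc x n * (x + n)

/-- The probabilistic Lah numbers associated with the random variable `Y`, defined from
the iid copies `Ys` of `Y` via `L_Y(n,k) = (1/k!) ∑_{l=0}^k C(k,l) (-1)^{k-l} E[⟨S_l⟩_n]`,
where `S_l = Y_1 + ⋯ + Y_l`. -/
noncomputable def probLah {Ω : Type*} [MeasurableSpace Ω] (μ : Measure Ω)
    (Ys : ℕ → Ω → ℝ) (n k : ℕ) : ℝ :=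
  (k.factorial : ℝ)⁻¹ * ∑ l ∈ Finset.range (k + 1),
    (k.choose l : ℝ) * (-1) ^ (k - l) * ∫ ω, asc (∑ j ∈ Finset.range l, Ys j ω) n ∂μ

/-- The probabilistic Lah-Bell polynomials `B_n^{(L,Y)}(x) = ∑_{k=0}^n L_Y(n,k) x^k`. -/
noncomputable def probLahBell {Ω : Type*} [MeasurableSpace Ω] (μ : Measure Ω)
    (Ys : ℕ → Ω → ℝ) (n : ℕ) (x : ℝ) : ℝ :=
  ∑ k ∈ Finset.range (n + 1), probLah μ Ys n k * x ^ k

lemma asc_eq_eval_ascPochhammer (x : ℝ) (n : ℕ) : asc x n = (ascPochhammer ℝ n).eval x := by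
  induction n with
  | zero => simp [asc]
  | succ n ih => rw [asc, ih, ascPochhammer_succ_eval]

lemma continuous_asc (n : ℕ) : Continuous fun x => asc x n := by
  simpa only [asc_eq_eval_ascPochhammer] using (ascPochhammer ℝ n).continuous

lemma asc_zero_left (n : ℕ) : asc 0 n = if n = 0 then 1 else 0 := by
  rw [asc_eq_eval_ascPochhammer, ascPochhammer_eval_zero]

lemma asc_add (x y : ℝ) (n : ℕ) :
    asc (x + y) n = ∑ ij ∈ antidiagonal n, (n.choose ij.1 : ℝ) * (asc x ij.1 * asc y ij.2) := by
  induction n with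
  | zero => simp [asc]
  | succ n ih =>
    rw [sum_antidiagonal_choose_succ_mul (fun i j => asc x i * asc y j), ← sum_add_distrib, asc,
      ih, sum_mul]
    refine sum_congr rfl fun ij hij => ?_
    rw [HasAntidiagonal.mem_antidiagonal] at hij
    have hsplit : x + y + n = (x + ij.1) + (y + ij.2) := by rw [← hij]; push_cast; ring
    rw [Nat.choose_symm_of_eq_add (by omega : n = ij.2 + ij.1), hsplit, asc, asc]
    ring

section Integrability

variable {Ω : Type*} [MeasurableSpace Ω] {μ : Measure Ω}

lemma Polynomial.integrable_eval_comp {X : Ω → ℝ} (hX : ∀ n, Integrable (fun ω => X ω ^ n) μ)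
    (p : Polynomial ℝ) : Integrable (fun ω => p.eval (X ω)) μ := by
  simp_rw [Polynomial.eval_eq_sum_range]
  exact integrable_finsetSum _ fun i _ => (hX i).const_mul _

lemma integrable_asc_comp {X : Ω → ℝ} (hX : ∀ n, Integrable (fun ω => X ω ^ n) μ) (n : ℕ) :
    Integrable (fun ω => asc (X ω) n) μ := by
  simpa only [asc_eq_eval_ascPochhammer] using (ascPochhammer ℝ n).integrable_eval_comp hX

end Integrability

lemma Polynomial.iteratedDeriv_eval (p : Polynomial ℝ) (k : ℕ) :
    iteratedDeriv k (fun x => p.eval x) = fun x => (Polynomial.derivative^[k] p).eval x := by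
  induction k with
  | zero => simp
  | succ k ih =>
    ext x
    rw [iteratedDeriv_succ, ih, Function.iterate_succ_apply', Polynomial.deriv]

noncomputable def egf : (ℕ → ℝ) →ₗ[ℝ] PowerSeries ℝ where
  toFun a := PowerSeries.mk fun n => a n / n.factorial
  map_add' a b := by ext n; simp [add_div]
  map_smul' c a := by ext n; simp [mul_div_assoc]

lemma coeff_egf (a : ℕ → ℝ) (n : ℕ) : PowerSeries.coeff n (egf a) = a n / n.factorial := by
  simp [egf]

lemma egf_injective : Function.Injective egf := by
  intro a b h
  funext n
  have := congrArg (PowerSeries.coeff n) h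
  rwa [coeff_egf, coeff_egf, div_left_inj' (by positivity)] at this

lemma egf_mul (a b : ℕ → ℝ) :
    egf a * egf b =
      egf fun n => ∑ ij ∈ antidiagonal n, (n.choose ij.1 : ℝ) * (a ij.1 * b ij.2) := by
  ext n
  rw [PowerSeries.coeff_mul, coeff_egf, sum_div]
  refine sum_congr rfl fun ij hij => ?_
  rw [HasAntidiagonal.mem_antidiagonal] at hij
  have hfac : ((n.choose ij.1 * ij.1.factorial * ij.2.factorial : ℕ) : ℝ) = n.factorial := by
    rw [← hij, Nat.choose_symm_add, Nat.add_choose_mul_factorial_mul_factorial]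
  have hchoose : (n.choose ij.1 : ℝ) ≠ 0 := by exact_mod_cast (Nat.choose_pos (by omega)).ne'
  push_cast at hfac
  rw [coeff_egf, coeff_egf, ← hfac]
  field_simp

namespace ProbabilityTheory.IdentDistrib

variable {Ω Ω' : Type*} [MeasurableSpace Ω] [MeasurableSpace Ω'] {μ : Measure Ω}
  {ν : Measure Ω'} {X : Ω → ℝ} {Y : Ω' → ℝ}

lemma integral_asc_eq (h : IdentDistrib X Y μ ν) (n : ℕ) :
    ∫ ω, asc (X ω) n ∂μ = ∫ ω, asc (Y ω) n ∂ν :=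
  (h.comp (continuous_asc n).measurable).integral_eq

lemma integrable_asc (h : IdentDistrib X Y μ ν) {n : ℕ}
    (hY : Integrable (fun ω => asc (Y ω) n) ν) : Integrable (fun ω => asc (X ω) n) μ :=
  (h.comp (continuous_asc n).measurable).integrable_iff.mpr hY

end ProbabilityTheory.IdentDistrib

section IIDSums

variable {Ω : Type*} [MeasurableSpace Ω] {μ : Measure Ω} {Y : Ω → ℝ} {Ys : ℕ → Ω → ℝ}

lemma indepFun_asc_sum_range (hmeas : ∀ j, AEMeasurable (Ys j) μ) (hindep : iIndepFun Ys μ)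
    (l i m : ℕ) :
    IndepFun (fun ω => asc (∑ j ∈ range l, Ys j ω) i) (fun ω => asc (Ys l ω) m) μ := by
  have h := (hindep.indepFun_sum_range_succ₀ hmeas l).comp (continuous_asc i).measurable
    (continuous_asc m).measurable
  simpa only [Function.comp_def, Finset.sum_apply] using h

variable [IsProbabilityMeasure μ]

lemma integrable_asc_sum_range (hid : ∀ j, IdentDistrib (Ys j) Y μ μ) (hindep : iIndepFun Ys μ)
    (hY : ∀ n, Integrable (fun ω => Y ω ^ n) μ) (l n : ℕ) :
    Integrable (fun ω => asc (∑ j ∈ range l, Ys j ω) n) μ := by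
  induction l generalizing n with
  | zero => simp
  | succ l ih =>
    simp_rw [sum_range_succ, asc_add]
    refine integrable_finsetSum _ fun ij _ => Integrable.const_mul ?_ _
    exact (indepFun_asc_sum_range (fun j => (hid j).aemeasurable_fst) hindep l _ _).integrable_mul
      (ih _) ((hid l).integrable_asc (integrable_asc_comp hY _))

lemma integral_asc_sum_range_succ (hid : ∀ j, IdentDistrib (Ys j) Y μ μ)
    (hindep : iIndepFun Ys μ) (hY : ∀ n, Integrable (fun ω => Y ω ^ n) μ) (l n : ℕ) :
    ∫ ω, asc (∑ j ∈ range (l + 1), Ys j ω) n ∂μ = ∑ ij ∈ antidiagonal n, (n.choose ij.1 : ℝ) *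
      ((∫ ω, asc (∑ j ∈ range l, Ys j ω) ij.1 ∂μ) * ∫ ω, asc (Y ω) ij.2 ∂μ) := by
  simp_rw [sum_range_succ, asc_add]
  have hmeas j : AEMeasurable (Ys j) μ := (hid j).aemeasurable_fst
  have hindep' := indepFun_asc_sum_range hmeas hindep l
  have hint_Ys m : Integrable (fun ω => asc (Ys l ω) m) μ :=
    (hid l).integrable_asc (integrable_asc_comp hY m)
  have hint_S m := integrable_asc_sum_range hid hindep hY l m
  have hint_mul i m : Integrable (fun ω => asc (∑ j ∈ range l, Ys j ω) i * asc (Ys l ω) m) μ :=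
    (hindep' i m).integrable_mul (hint_S i) (hint_Ys m)
  rw [integral_finsetSum _ fun ij _ => (hint_mul ij.1 ij.2).const_mul _]
  refine sum_congr rfl fun ij _ => ?_
  rw [integral_const_mul, (hindep' _ _).integral_fun_mul_eq_mul_integral (hint_S _).1 (hint_Ys _).1,
    (hid l).integral_asc_eq]

lemma egf_integral_asc_sum_range (hid : ∀ j, IdentDistrib (Ys j) Y μ μ)
    (hindep : iIndepFun Ys μ) (hY : ∀ n, Integrable (fun ω => Y ω ^ n) μ) (l : ℕ) :
    egf (fun n => ∫ ω, asc (∑ j ∈ range l, Ys j ω) n ∂μ) =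
      egf (fun n => ∫ ω, asc (Y ω) n ∂μ) ^ l := by
  induction l with
  | zero =>
    ext n
    rw [coeff_egf, pow_zero, PowerSeries.coeff_one]
    split_ifs with hn <;> simp [hn, asc_zero_left]
  | succ l ih =>
    rw [pow_succ, ← ih, egf_mul]
    congr with n
    exact integral_asc_sum_range_succ hid hindep hY l n

lemma egf_factorial_mul_probLah (hid : ∀ j, IdentDistrib (Ys j) Y μ μ)
    (hindep : iIndepFun Ys μ) (hY : ∀ n, Integrable (fun ω => Y ω ^ n) μ) (k : ℕ) :
    egf (fun n => k.factorial * probLah μ Ys n k) =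
      (egf (fun n => ∫ ω, asc (Y ω) n ∂μ) - 1) ^ k := by
  have hexpand : (fun n => k.factorial * probLah μ Ys n k) = ∑ l ∈ range (k + 1),
      ((k.choose l : ℝ) * (-1) ^ (k - l)) • fun n => ∫ ω, asc (∑ j ∈ range l, Ys j ω) n ∂μ := by
    ext n
    rw [probLah, mul_inv_cancel_left₀ (by positivity)]
    simp [Finset.sum_apply, mul_assoc]
  rw [hexpand, map_sum, sub_eq_add_neg, add_pow]
  refine sum_congr rfl fun l _ => ?_
  rw [map_smul, egf_integral_asc_sum_range hid hindep hY, Algebra.smul_def]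
  simp only [PowerSeries.algebraMap_eq, map_mul, map_natCast, map_pow, map_neg, map_one]
  ring

end IIDSums

section ExponentialArray

variable {L : ℕ → ℕ → ℝ} {F : PowerSeries ℝ}

lemma eq_zero_of_egf_eq_pow_of_lt (hL : ∀ k, egf (fun n => k.factorial * L n k) = F ^ k)
    (hF : PowerSeries.constantCoeff F = 0) {n k : ℕ} (h : n < k) : L n k = 0 := by
  have hdvd : PowerSeries.X ^ k ∣ F ^ k := pow_dvd_pow_of_dvd (PowerSeries.X_dvd_iff.mpr hF) k
  have hcoeff := PowerSeries.X_pow_dvd_iff.mp hdvd n h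
  rw [← hL, coeff_egf] at hcoeff
  simpa [Nat.factorial_ne_zero] using hcoeff

lemma factorial_add_mul_eq_of_egf_eq_pow (hL : ∀ k, egf (fun n => k.factorial * L n k) = F ^ k)
    (m k n : ℕ) : ((m + k).factorial : ℝ) * L n (m + k) = ∑ ij ∈ antidiagonal n,
      (n.choose ij.1 : ℝ) * ((m.factorial * L ij.1 m) * (k.factorial * L ij.2 k)) := by
  have h : egf (fun n => ((m + k).factorial : ℝ) * L n (m + k)) =
      egf (fun n => ∑ ij ∈ antidiagonal n,
        (n.choose ij.1 : ℝ) * ((m.factorial * L ij.1 m) * (k.factorial * L ij.2 k))) := by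
    rw [hL, pow_add, ← hL m, ← hL k, egf_mul]
  exact congrFun (egf_injective h) n

lemma factorial_add_mul_eq_sum_range (hL : ∀ k, egf (fun n => k.factorial * L n k) = F ^ k)
    (hF : PowerSeries.constantCoeff F = 0) (m k n : ℕ) :
    ((m + k).factorial : ℝ) * L n (m + k) = ∑ j ∈ range (n - k + 1),
      (n.choose j : ℝ) * ((m.factorial * L j m) * (k.factorial * L (n - j) k)) := by
  rw [factorial_add_mul_eq_of_egf_eq_pow hL, Nat.sum_antidiagonal_eq_sum_range_succ_mk]
  refine (sum_subset (range_subset_range.mpr (by omega)) fun j hj hj' => ?_).symm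
  simp only [mem_range] at hj hj'
  rw [eq_zero_of_egf_eq_pow_of_lt hL hF (by omega : n - j < k), mul_zero, mul_zero, mul_zero]

noncomputable def rowPolynomial (L : ℕ → ℕ → ℝ) (n : ℕ) : Polynomial ℝ :=
  ∑ k ∈ range (n + 1), Polynomial.C (L n k) * Polynomial.X ^ k

lemma eval_rowPolynomial (n : ℕ) (x : ℝ) :
    (rowPolynomial L n).eval x = ∑ k ∈ range (n + 1), L n k * x ^ k := by
  simp [rowPolynomial, Polynomial.eval_finsetSum]

lemma coeff_rowPolynomial (hL : ∀ {n k}, n < k → L n k = 0) (n i : ℕ) :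
    (rowPolynomial L n).coeff i = L n i := by
  simp only [rowPolynomial, Polynomial.finsetSum_coeff, Polynomial.coeff_C_mul_X_pow]
  rw [sum_ite_eq, ite_eq_left_iff]
  intro hi
  exact (hL (by simpa using hi)).symm

lemma iterate_derivative_rowPolynomial (hL : ∀ k, egf (fun n => k.factorial * L n k) = F ^ k)
    (hF : PowerSeries.constantCoeff F = 0) (n k : ℕ) :
    Polynomial.derivative^[k] (rowPolynomial L n) = Polynomial.C (k.factorial : ℝ) *
      ∑ j ∈ range (n - k + 1),
        Polynomial.C ((n.choose j : ℝ) * L (n - j) k) * rowPolynomial L j := by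
  have hvan {n k : ℕ} (h : n < k) : L n k = 0 := eq_zero_of_egf_eq_pow_of_lt hL hF h
  ext m
  simp only [Polynomial.coeff_iterate_derivative, Polynomial.coeff_C_mul,
    Polynomial.finsetSum_coeff, coeff_rowPolynomial hvan, nsmul_eq_mul]
  have hdesc : (m.factorial : ℝ) * (m + k).descFactorial k = (m + k).factorial := by
    have h := Nat.factorial_mul_descFactorial (Nat.le_add_left k m)
    rw [Nat.add_sub_cancel] at h
    exact_mod_cast h
  refine mul_left_cancel₀ (Nat.cast_ne_zero.mpr m.factorial_ne_zero : (m.factorial : ℝ) ≠ 0) ?_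
  rw [← mul_assoc, hdesc, factorial_add_mul_eq_sum_range hL hF, mul_sum, mul_sum]
  exact sum_congr rfl fun j _ => by ring

lemma iteratedDeriv_eval_rowPolynomial
    (hL : ∀ k, egf (fun n => k.factorial * L n k) = F ^ k)
    (hF : PowerSeries.constantCoeff F = 0) (n k : ℕ) (x : ℝ) :
    iteratedDeriv k (fun y => (rowPolynomial L n).eval y) x = k.factorial *
      ∑ j ∈ range (n - k + 1), (n.choose j : ℝ) * (rowPolynomial L j).eval x * L (n - j) k := by
  rw [Polynomial.iteratedDeriv_eval, iterate_derivative_rowPolynomial hL hF]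
  simp only [Polynomial.eval_mul, Polynomial.eval_C, Polynomial.eval_finsetSum]
  congr 1
  exact sum_congr rfl fun j _ => by ring

end ExponentialArray

section LahNumbers

variable {Ω : Type*} [MeasurableSpace Ω] {μ : Measure Ω} {Y : Ω → ℝ} {Ys : ℕ → Ω → ℝ}

lemma constantCoeff_egf_integral_asc [IsProbabilityMeasure μ] :
    PowerSeries.constantCoeff (egf fun n => ∫ ω, asc (Y ω) n ∂μ) = 1 := by
  simp [← PowerSeries.coeff_zero_eq_constantCoeff_apply, coeff_egf, asc]

lemma eval_rowPolynomial_probLah (n : ℕ) (x : ℝ) :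
    (rowPolynomial (probLah μ Ys) n).eval x = probLahBell μ Ys n x :=
  eval_rowPolynomial n x

lemma probLah_one (hid : IdentDistrib (Ys 0) Y μ μ) {n : ℕ} (hn : n ≠ 0) :
    probLah μ Ys n 1 = ∫ ω, asc (Y ω) n ∂μ := by
  simp [probLah, sum_range_succ, asc_zero_left, hn, hid.integral_asc_eq]

end LahNumbers

theorem statement_11_general {Ω : Type*} [MeasurableSpace Ω] (μ : Measure Ω) [IsProbabilityMeasure μ]
    (Y : Ω → ℝ) (Ys : ℕ → Ω → ℝ)
    (hid : ∀ j, IdentDistrib (Ys j) Y μ μ)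
    (hindep : iIndepFun Ys μ)
    (r : ℝ) (hr : 0 < r)
    (hmgf : ∀ t : ℝ, |t| < r → Integrable (fun ω => Real.exp (t * Y ω)) μ)
    (n k : ℕ) (x : ℝ) :
    (iteratedDeriv k (fun y => probLahBell μ Ys n y) x = (k.factorial : ℝ) *
      ∑ j ∈ Finset.range (n - k + 1),
        (n.choose j : ℝ) * probLahBell μ Ys j x * probLah μ Ys (n - j) k) ∧
    (1 ≤ n → deriv (fun y => probLahBell μ Ys n y) x =
      ∑ j ∈ Finset.range n,
        (n.choose j : ℝ) * (∫ ω, asc (Y ω) (n - j) ∂μ) * probLahBell μ Ys j x) := by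
  have hr2 : |r / 2| < r := by rw [abs_of_pos (half_pos hr)]; linarith
  have hmoments : ∀ m, Integrable (fun ω => Y ω ^ m) μ :=
    integrable_pow_of_integrable_exp_mul (half_pos hr).ne' (hmgf _ hr2)
      (hmgf _ (by rwa [abs_neg]))
  have hF : PowerSeries.constantCoeff (egf (fun n => ∫ ω, asc (Y ω) n ∂μ) - 1) = 0 := by
    rw [map_sub, constantCoeff_egf_integral_asc, map_one, sub_self]
  have hderiv (k : ℕ) := iteratedDeriv_eval_rowPolynomial
    (egf_factorial_mul_probLah hid hindep hmoments) hF n k x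
  simp only [eval_rowPolynomial_probLah] at hderiv
  refine ⟨hderiv k, fun hn => ?_⟩
  rw [← iteratedDeriv_one, hderiv 1, Nat.factorial_one, Nat.cast_one, one_mul,
    Nat.sub_add_cancel hn]
  refine sum_congr rfl fun j hj => ?_
  rw [probLah_one (hid 0) (Nat.sub_ne_zero_of_lt (mem_range.mp hj))]
  ring

theorem statement_11 {Ω : Type*} [MeasurableSpace Ω] (μ : Measure Ω) [IsProbabilityMeasure μ]
    (Y : Ω → ℝ) (Ys : ℕ → Ω → ℝ)
    (hY : Measurable Y) (hYs : ∀ j, Measurable (Ys j))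
    (hid : ∀ j, IdentDistrib (Ys j) Y μ μ)
    (hindep : iIndepFun Ys μ)
    (r : ℝ) (hr : 0 < r)
    (hmgf : ∀ t : ℝ, |t| < r → Integrable (fun ω => Real.exp (t * Y ω)) μ)
    (n k : ℕ) (hkn : k ≤ n) (x : ℝ) :
    (iteratedDeriv k (fun y => probLahBell μ Ys n y) x = (k.factorial : ℝ) *
      ∑ j ∈ Finset.range (n - k + 1),
        (n.choose j : ℝ) * probLahBell μ Ys j x * probLah μ Ys (n - j) k) ∧
    (1 ≤ n → deriv (fun y => probLahBell μ Ys n y) x =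
      ∑ j ∈ Finset.range n,
        (n.choose j : ℝ) * (∫ ω, asc (Y ω) (n - j) ∂μ) * probLahBell μ Ys j x) :=
  statement_11_general μ Y Ys hid hindep r hr hmgf n k x
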